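/- Let (ξ_i, 𝔉_i) be square-integrable martingale differences, S_n = Σ ξ_i, B_n(0) = Σ (ξ_i⁺)² + Σ E[(ξ_i⁻)² | 𝔉_{i-1}]. Then for all b > 0, M ≥ 1 and x > 0, P(S_n ≥ x √(B_n(0)), b ≤ √(B_n(0)) ≤ bM) ≤ √e (1 + 2(1+x) ln M) exp{- x²/2}. -/

import Mathlib

/-!
For `l ≥ 0` the pointwise bound `exp (l t - l² (t⁺)² / 2) ≤ 1 + l t + l² (t⁻)² / 2` and the
martingale property give `E[exp (l ξᵢ - l² ((ξᵢ⁺)² + E[(ξᵢ⁻)² | 𝔉ᵢ₋₁]) / 2) | 𝔉ᵢ₋₁] ≤ 1`, hence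
`E exp (l Sₙ - l² Bₙ / 2) ≤ 1` for every `l ≥ 0`. On the part of the event where
`a ≤ √Bₙ ≤ a γ`, the choice `l = x / (a γ)` makes the exponent at least `x² / 2 - 1 / 2` provided
`x (1 - γ⁻¹) ≤ 1`, so Markov's inequality bounds its probability by `√e exp (-x² / 2)`. For
`γ = exp (1 / (2 (1 + x)))`, at most `1 + 2 (1 + x) log M` slices `[b γᵏ, b γᵏ⁺¹]` cover `[b, b M]`.
-/

open MeasureTheory Real Finset

theorem exp_sub_sq_div_two_le_one_add {u : ℝ} (hu : 0 ≤ u) : exp (u - u ^ 2 / 2) ≤ 1 + u := by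
  have hlog : u - u ^ 2 / 2 ≤ log (1 + u) := by
    refine le_trans ?_ (le_log_one_add_of_nonneg hu)
    rw [le_div_iff₀ (by positivity)]
    nlinarith [pow_nonneg hu 3]
  calc exp (u - u ^ 2 / 2) ≤ exp (log (1 + u)) := exp_le_exp.2 hlog
    _ = 1 + u := exp_log (by positivity)

theorem exp_le_one_add_add_sq_div_two {u : ℝ} (hu : u ≤ 0) : exp u ≤ 1 + u + u ^ 2 / 2 := by
  have hneg := quadratic_le_exp_of_nonneg (neg_nonneg.2 hu)
  have hinv : exp u * exp (-u) = 1 := by rw [← exp_add, add_neg_cancel, exp_zero]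
  -- `(1 + u + u²/2)(1 - u + u²/2) = 1 + u⁴/4 ≥ 1`
  nlinarith [exp_pos u, sq_nonneg (u ^ 2), mul_le_mul_of_nonneg_left hneg (exp_pos u).le]

theorem exp_mul_sub_max_sq_le {l : ℝ} (hl : 0 ≤ l) (t : ℝ) :
    exp (l * t - l ^ 2 / 2 * max t 0 ^ 2) ≤ 1 + l * t + l ^ 2 / 2 * max (-t) 0 ^ 2 := by
  rcases le_total 0 t with ht | ht
  · rw [max_eq_left ht, max_eq_right (neg_nonpos.2 ht)]
    calc _ = exp (l * t - (l * t) ^ 2 / 2) := by ring_nf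
      _ ≤ 1 + l * t := exp_sub_sq_div_two_le_one_add (mul_nonneg hl ht)
      _ = _ := by ring
  · rw [max_eq_right ht, max_eq_left (neg_nonneg.2 ht)]
    calc _ = exp (l * t) := by ring_nf
      _ ≤ 1 + l * t + (l * t) ^ 2 / 2 :=
        exp_le_one_add_add_sq_div_two (mul_nonpos_of_nonneg_of_nonpos hl ht)
      _ = _ := by ring

theorem mul_sub_max_sq_le_half {l : ℝ} (hl : 0 ≤ l) (t : ℝ) :
    l * t - l ^ 2 / 2 * max t 0 ^ 2 ≤ 1 / 2 := by
  rcases le_total 0 t with ht | ht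
  · rw [max_eq_left ht]
    nlinarith [sq_nonneg (l * t - 1)]
  · rw [max_eq_right ht]
    nlinarith [mul_nonpos_of_nonneg_of_nonpos hl ht]

theorem exists_lt_le_and_le_succ {α : Type*} [LinearOrder α] (a : ℕ → α) {u : α} (h0 : a 0 ≤ u)
    {K : ℕ} (hK : 0 < K) (hu : u ≤ a K) : ∃ k < K, a k ≤ u ∧ u ≤ a (k + 1) := by
  induction K, hK using Nat.le_induction with
  | base => exact ⟨0, one_pos, h0, hu⟩
  | succ K _ ih =>
    rcases le_or_gt u (a K) with h | h
    · obtain ⟨k, hk, hk'⟩ := ih h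
      exact ⟨k, hk.trans K.lt_succ_self, hk'⟩
    · exact ⟨K, K.lt_succ_self, h.le, hu⟩

theorem exists_peeling_grid {x M : ℝ} (hx : 0 < x) (hM : 1 ≤ M) :
    ∃ γ : ℝ, 0 < γ ∧ x * (1 - γ⁻¹) ≤ 1 ∧
      ∃ K : ℕ, 0 < K ∧ M ≤ γ ^ K ∧ (K : ℝ) ≤ 1 + 2 * (1 + x) * log M := by
  set c := 1 / (2 * (1 + x))
  have hc : 0 < c := by positivity
  have hlogM : 0 ≤ 2 * (1 + x) * log M := mul_nonneg (by positivity) (log_nonneg hM)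
  refine ⟨exp c, exp_pos c, ?_, max ⌈2 * (1 + x) * log M⌉₊ 1, by positivity, ?_, ?_⟩
  · have h1 : 1 - c ≤ (exp c)⁻¹ := by
      rw [← exp_neg]; linarith [add_one_le_exp (-c)]
    have h2 : x * c ≤ 1 := by
      rw [mul_one_div, div_le_one (by positivity)]; linarith
    nlinarith
  · have hK : 2 * (1 + x) * log M ≤ (max ⌈2 * (1 + x) * log M⌉₊ 1 : ℕ) :=
      (Nat.le_ceil _).trans (by exact_mod_cast le_max_left _ _)
    calc M = exp (log M) := (exp_log (by linarith)).symm
      _ ≤ exp ((max ⌈2 * (1 + x) * log M⌉₊ 1 : ℕ) * c) := by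
          refine exp_le_exp.2 ?_
          rw [mul_one_div, le_div_iff₀ (by positivity)]
          linarith
      _ = exp c ^ max ⌈2 * (1 + x) * log M⌉₊ 1 := by rw [← exp_nat_mul]
  · rw [Nat.cast_max, Nat.cast_one, max_le_iff]
    exact ⟨(Nat.ceil_lt_add_one hlogM).le.trans_eq (add_comm _ _), le_add_of_nonneg_right hlogM⟩

section Supermartingale

variable {Ω : Type*} {m : MeasurableSpace Ω} {μ : Measure Ω}

theorem integrable_exp_mul_sub_max_sq [IsFiniteMeasure μ] {X : Ω → ℝ}
    (hX : AEStronglyMeasurable X μ) {l : ℝ} (hl : 0 ≤ l) :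
    Integrable (fun ω => exp (l * X ω - l ^ 2 / 2 * max (X ω) 0 ^ 2)) μ := by
  refine Integrable.of_bound ?_ (exp (1 / 2)) (ae_of_all _ fun ω => ?_)
  · exact (by fun_prop : Continuous fun t => exp (l * t - l ^ 2 / 2 * max t 0 ^ 2))
      |>.comp_aestronglyMeasurable hX
  · rw [norm_of_nonneg (exp_pos _).le]
    exact exp_le_exp.2 (mul_sub_max_sq_le_half hl (X ω))

theorem condExp_exp_mul_sub_max_sq_le [IsFiniteMeasure μ] {𝔊 : MeasurableSpace Ω} (h𝔊 : 𝔊 ≤ m)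
    {X : Ω → ℝ} (hX : MemLp X 2 μ) (hmart : μ[X | 𝔊] =ᵐ[μ] 0) {l : ℝ} (hl : 0 ≤ l) :
    μ[fun ω => exp (l * X ω - l ^ 2 / 2 * max (X ω) 0 ^ 2) | 𝔊] ≤ᵐ[μ]
      fun ω => 1 + l ^ 2 / 2 * μ[fun ω => max (-X ω) 0 ^ 2 | 𝔊] ω := by
  set N : Ω → ℝ := fun ω => max (-X ω) 0 ^ 2
  have hXi : Integrable (l • X) μ := (hX.integrable one_le_two).smul l
  have hNi : Integrable ((l ^ 2 / 2) • N) μ :=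
    ((memLp_two_iff_integrable_sq hX.neg_part.1).1 hX.neg_part).smul _
  have hYi := integrable_exp_mul_sub_max_sq hX.1 hl
  have hmono := condExp_mono (m := 𝔊) hYi ((integrable_const 1).add (hXi.add hNi))
    (ae_of_all _ fun ω => by simpa [N, add_assoc] using exp_mul_sub_max_sq_le hl (X ω))
  filter_upwards [hmono, condExp_add (m := 𝔊) (integrable_const 1) (hXi.add hNi),
    condExp_add (m := 𝔊) hXi hNi, condExp_smul (m := 𝔊) l X, condExp_smul (m := 𝔊) (l ^ 2 / 2) N,
    hmart] with ω h h1 h2 h3 h4 h5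
  simp only [Pi.add_apply, Pi.smul_apply, smul_eq_mul, condExp_const h𝔊, Pi.zero_apply]
    at h h1 h2 h3 h4 h5
  rw [h1, h2, h3, h4, h5] at h
  simpa using h

theorem condExp_exp_mul_sub_le_one [IsFiniteMeasure μ] {𝔊 : MeasurableSpace Ω} (h𝔊 : 𝔊 ≤ m)
    {X : Ω → ℝ} (hX : MemLp X 2 μ) (hmart : μ[X | 𝔊] =ᵐ[μ] 0) {l : ℝ} (hl : 0 ≤ l) :
    μ[fun ω => exp (l * X ω - l ^ 2 / 2 * (max (X ω) 0 ^ 2 + μ[fun ω => max (-X ω) 0 ^ 2 | 𝔊] ω))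
      | 𝔊] ≤ᵐ[μ] 1 := by
  set a : Ω → ℝ := fun ω => l ^ 2 / 2 * μ[fun ω => max (-X ω) 0 ^ 2 | 𝔊] ω
  set Y : Ω → ℝ := fun ω => exp (l * X ω - l ^ 2 / 2 * max (X ω) 0 ^ 2)
  have ha : StronglyMeasurable[𝔊] fun ω => exp (-a ω) :=
    (stronglyMeasurable_condExp.measurable.const_mul _).neg.exp.stronglyMeasurable
  have ha0 : ∀ᵐ ω ∂μ, 0 ≤ a ω := by
    filter_upwards [condExp_nonneg (m := 𝔊) (ae_of_all μ fun ω => sq_nonneg (max (-X ω) 0))]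
      with ω hω using mul_nonneg (by positivity) hω
  have hYi : Integrable Y μ := integrable_exp_mul_sub_max_sq hX.1 hl
  have hprod : (fun ω => exp (l * X ω - l ^ 2 / 2 * (max (X ω) 0 ^ 2
      + μ[fun ω => max (-X ω) 0 ^ 2 | 𝔊] ω))) = (fun ω => exp (-a ω)) * Y := by
    ext ω
    simp only [Pi.mul_apply, a, Y, ← exp_add]
    ring_nf
  have hprodi : Integrable ((fun ω => exp (-a ω)) * Y) μ := by
    refine hYi.bdd_mul (c := 1) (ha.mono h𝔊).aestronglyMeasurable ?_
    filter_upwards [ha0] with ω hω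
    rw [norm_of_nonneg (exp_pos _).le, exp_le_one_iff]
    linarith
  rw [hprod]
  filter_upwards [condExp_mul_of_stronglyMeasurable_left ha hprodi hYi,
    condExp_exp_mul_sub_max_sq_le h𝔊 hX hmart hl] with ω h1 h2
  calc _ = exp (-a ω) * μ[Y | 𝔊] ω := h1
    _ ≤ exp (-a ω) * exp (a ω) :=
      mul_le_mul_of_nonneg_left (h2.trans (by linarith [add_one_le_exp (a ω)] : 1 + a ω ≤ _))
        (exp_pos _).le
    _ = 1 := by rw [← exp_add, neg_add_cancel, exp_zero]

theorem integral_mul_le_of_condExp_le_one [IsFiniteMeasure μ] {𝔊 : MeasurableSpace Ω}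
    (h𝔊 : 𝔊 ≤ m) {W Y : Ω → ℝ} (hW : StronglyMeasurable[𝔊] W) (hW0 : 0 ≤ᵐ[μ] W)
    (hWi : Integrable W μ) (hYi : Integrable Y μ) (hWYi : Integrable (W * Y) μ)
    (hY : μ[Y | 𝔊] ≤ᵐ[μ] 1) :
    ∫ ω, W ω * Y ω ∂μ ≤ ∫ ω, W ω ∂μ := by
  have hpull := condExp_mul_of_stronglyMeasurable_left hW hWYi hYi
  calc ∫ ω, W ω * Y ω ∂μ = ∫ ω, μ[W * Y | 𝔊] ω ∂μ := (integral_condExp h𝔊).symm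
    _ = ∫ ω, W ω * μ[Y | 𝔊] ω ∂μ := integral_congr_ae hpull
    _ ≤ ∫ ω, W ω ∂μ := by
      refine integral_mono_ae (integrable_condExp.congr hpull) hWi ?_
      filter_upwards [hY, hW0] with ω h1 h2
      exact mul_le_of_le_one_right h2 h1

theorem integral_prod_Icc_le_one [IsProbabilityMeasure μ] (𝔉 : Filtration ℕ m) {D : ℕ → Ω → ℝ}
    {C : ℝ} (hadp : StronglyAdapted 𝔉 D) (h0 : ∀ i, 0 ≤ᵐ[μ] D i) (hC : ∀ i, ∀ᵐ ω ∂μ, D i ω ≤ C)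
    (hcond : ∀ i, 1 ≤ i → μ[D i | 𝔉 (i - 1)] ≤ᵐ[μ] 1) (n : ℕ) :
    Integrable (fun ω => ∏ i ∈ Icc 1 n, D i ω) μ ∧ ∫ ω, ∏ i ∈ Icc 1 n, D i ω ∂μ ≤ 1 := by
  have hmeas : ∀ n, StronglyMeasurable[𝔉 n] fun ω => ∏ i ∈ Icc 1 n, D i ω := fun n =>
    Finset.stronglyMeasurable_fun_prod _ fun i hi => (hadp i).mono (𝔉.mono (mem_Icc.1 hi).2)
  have hbound : ∀ n, ∀ᵐ ω ∂μ, 0 ≤ ∏ i ∈ Icc 1 n, D i ω ∧ ∏ i ∈ Icc 1 n, D i ω ≤ C ^ n := by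
    intro n
    filter_upwards [ae_all_iff.2 h0, ae_all_iff.2 hC] with ω h0ω hCω
    refine ⟨prod_nonneg fun i _ => h0ω i, ?_⟩
    calc ∏ i ∈ Icc 1 n, D i ω ≤ ∏ _i ∈ Icc 1 n, C :=
        prod_le_prod (fun i _ => h0ω i) fun i _ => hCω i
      _ = C ^ n := by simp
  have hint : ∀ n, Integrable (fun ω => ∏ i ∈ Icc 1 n, D i ω) μ := fun n =>
    Integrable.of_bound ((hmeas n).mono (𝔉.le n)).aestronglyMeasurable (C ^ n) <| by
      filter_upwards [hbound n] with ω hω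
      rw [norm_of_nonneg hω.1]
      exact hω.2
  have hDi : ∀ i, Integrable (D i) μ := fun i =>
    Integrable.of_bound ((hadp i).mono (𝔉.le i)).aestronglyMeasurable C <| by
      filter_upwards [h0 i, hC i] with ω h0ω hCω
      rwa [norm_of_nonneg h0ω]
  refine ⟨hint n, ?_⟩
  induction n with
  | zero => simp
  | succ n ih =>
    have hcond' := hcond (n + 1) n.succ_pos
    rw [Nat.add_sub_cancel] at hcond'
    simp only [prod_Icc_succ_top (Nat.le_add_left 1 n)]
    refine (integral_mul_le_of_condExp_le_one (𝔉.le n) (hmeas n) ?_ (hint n) (hDi _) ?_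
      hcond').trans ih
    · filter_upwards [hbound n] with ω hω using hω.1
    · have := hint (n + 1)
      simp only [prod_Icc_succ_top (Nat.le_add_left 1 n)] at this
      exact this

theorem integral_exp_mul_sum_sub_le_one [IsProbabilityMeasure μ] (𝔉 : Filtration ℕ m)
    {ξ : ℕ → Ω → ℝ} (hadp : StronglyAdapted 𝔉 ξ) (hL2 : ∀ i, MemLp (ξ i) 2 μ)
    (hmart : ∀ i, 1 ≤ i → μ[ξ i | 𝔉 (i - 1)] =ᵐ[μ] 0) {l : ℝ} (hl : 0 ≤ l) (n : ℕ) :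
    let E := fun ω => exp (l * ∑ i ∈ Icc 1 n, ξ i ω - l ^ 2 / 2 * (∑ i ∈ Icc 1 n, max (ξ i ω) 0 ^ 2
      + ∑ i ∈ Icc 1 n, μ[fun ω => max (-ξ i ω) 0 ^ 2 | 𝔉 (i - 1)] ω))
    Integrable E μ ∧ ∫ ω, E ω ∂μ ≤ 1 := by
  set D : ℕ → Ω → ℝ := fun i ω => exp (l * ξ i ω - l ^ 2 / 2 * (max (ξ i ω) 0 ^ 2
    + μ[fun ω => max (-ξ i ω) 0 ^ 2 | 𝔉 (i - 1)] ω))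
  have hprod : (fun ω => exp (l * ∑ i ∈ Icc 1 n, ξ i ω - l ^ 2 / 2 * (∑ i ∈ Icc 1 n,
      max (ξ i ω) 0 ^ 2 + ∑ i ∈ Icc 1 n, μ[fun ω => max (-ξ i ω) 0 ^ 2 | 𝔉 (i - 1)] ω)))
      = fun ω => ∏ i ∈ Icc 1 n, D i ω := by
    ext ω
    rw [← exp_sum, ← sum_add_distrib, mul_sum, mul_sum, ← sum_sub_distrib]
  have hadpD : StronglyAdapted 𝔉 D := fun i => by
    have hg : Measurable[𝔉 i] (μ[fun ω => max (-ξ i ω) 0 ^ 2 | 𝔉 (i - 1)]) :=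
      (stronglyMeasurable_condExp.mono (𝔉.mono (Nat.sub_le i 1))).measurable
    have hξ : Measurable[𝔉 i] (ξ i) := (hadp i).measurable
    exact Measurable.stronglyMeasurable (by fun_prop)
  have hD_le : ∀ i, ∀ᵐ ω ∂μ, D i ω ≤ exp (1 / 2) := fun i => by
    filter_upwards [condExp_nonneg (m := 𝔉 (i - 1))
      (ae_of_all μ fun ω => sq_nonneg (max (-ξ i ω) 0))] with ω hω
    have hhalf := mul_sub_max_sq_le_half hl (ξ i ω)
    have hg : 0 ≤ l ^ 2 / 2 * μ[fun ω => max (-ξ i ω) 0 ^ 2 | 𝔉 (i - 1)] ω :=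
      mul_nonneg (by positivity) hω
    exact exp_le_exp.2 (by linarith)
  simp only [hprod]
  exact integral_prod_Icc_le_one 𝔉 hadpD (fun i => ae_of_all _ fun ω => (exp_pos _).le) hD_le
    (fun i hi => condExp_exp_mul_sub_le_one (𝔉.le _) (hL2 i) (hmart i hi) hl) n

theorem measureReal_le_of_integral_exp_le_one [IsFiniteMeasure μ] {S B : Ω → ℝ} {x a γ : ℝ}
    (hx : 0 < x) (ha : 0 < a) (hγ : x * (1 - γ⁻¹) ≤ 1)
    (hint : Integrable (fun ω => exp (x / (a * γ) * S ω - (x / (a * γ)) ^ 2 / 2 * B ω)) μ)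
    (hE : ∫ ω, exp (x / (a * γ) * S ω - (x / (a * γ)) ^ 2 / 2 * B ω) ∂μ ≤ 1) :
    μ.real {ω | x * √(B ω) ≤ S ω ∧ a ≤ √(B ω) ∧ √(B ω) ≤ a * γ} ≤
      exp (1 / 2) * exp (-x ^ 2 / 2) := by
  set l := x / (a * γ)
  have hsub : {ω | x * √(B ω) ≤ S ω ∧ a ≤ √(B ω) ∧ √(B ω) ≤ a * γ} ⊆
      {ω | exp (x ^ 2 / 2 - 1 / 2) ≤ exp (l * S ω - l ^ 2 / 2 * B ω)} := by
    rintro ω ⟨hS, haB, hBa⟩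
    set t := √(B ω)
    have ht : 0 < t := ha.trans_le haB
    have hγ1 : 0 < γ := pos_of_mul_pos_right (ht.trans_le hBa) ha.le
    have hBt : B ω = t ^ 2 := (sq_sqrt (sqrt_pos.1 ht).le).symm
    have hu : γ⁻¹ ≤ t / (a * γ) := by
      rw [le_div_iff₀ (by positivity)]
      field_simp
      exact haB
    have hu1 : t / (a * γ) ≤ 1 := (div_le_one (by positivity)).2 hBa
    have hxu : (x * (1 - t / (a * γ))) ^ 2 ≤ 1 := by
      rw [sq_le_one_iff_abs_le_one, abs_of_nonneg (mul_nonneg hx.le (by linarith))]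
      nlinarith
    have hlt :
        l * (x * t) - l ^ 2 / 2 * t ^ 2 = x ^ 2 / 2 - (x * (1 - t / (a * γ))) ^ 2 / 2 := by
      simp only [l]
      field_simp
      ring
    have hlS : l * (x * t) ≤ l * S ω := mul_le_mul_of_nonneg_left hS (by positivity)
    exact exp_le_exp.2 (by rw [hBt]; linarith)
  have hmarkov := mul_meas_ge_le_integral_of_nonneg
    (ae_of_all _ fun ω => (exp_pos _).le) hint (exp (x ^ 2 / 2 - 1 / 2))
  calc μ.real {ω | x * √(B ω) ≤ S ω ∧ a ≤ √(B ω) ∧ √(B ω) ≤ a * γ}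
      ≤ μ.real {ω | exp (x ^ 2 / 2 - 1 / 2) ≤ exp (l * S ω - l ^ 2 / 2 * B ω)} :=
        measureReal_mono hsub
    _ ≤ 1 / exp (x ^ 2 / 2 - 1 / 2) := by
        rw [le_div_iff₀ (exp_pos _), mul_comm]
        exact hmarkov.trans hE
    _ = exp (1 / 2) * exp (-x ^ 2 / 2) := by
        rw [one_div, ← exp_neg, ← exp_add]
        ring_nf

end Supermartingale

theorem stmt_11 {Ω : Type*} {m : MeasurableSpace Ω} {μ : Measure Ω} [IsProbabilityMeasure μ]
    (𝔉 : ℕ → MeasurableSpace Ω) (hle : ∀ i, 𝔉 i ≤ m) (hmono : Monotone 𝔉)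
    (ξ : ℕ → Ω → ℝ)
    (hadp : ∀ i, StronglyMeasurable[𝔉 i] (ξ i))
    (hsq : ∀ i, Integrable (fun ω => (ξ i ω) ^ 2) μ)
    (hmart : ∀ i : ℕ, 1 ≤ i → μ[ξ i | 𝔉 (i - 1)] =ᵐ[μ] 0)
    (n : ℕ) (x b M : ℝ) (hx : 0 < x) (hb : 0 < b) (hM : 1 ≤ M)
    (S B : Ω → ℝ)
    (hS : S = fun ω => ∑ i ∈ Finset.Icc 1 n, ξ i ω)
    (hB : B = fun ω =>
      (∑ i ∈ Finset.Icc 1 n, (max (ξ i ω) 0) ^ 2)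
        + ∑ i ∈ Finset.Icc 1 n,
            (μ[fun ω' => (max (-(ξ i ω')) 0) ^ 2 | 𝔉 (i - 1)]) ω) :
    (μ {ω | x * Real.sqrt (B ω) ≤ S ω ∧ b ≤ Real.sqrt (B ω) ∧ Real.sqrt (B ω) ≤ b * M}).toReal ≤
      Real.sqrt (Real.exp 1) * (1 + 2 * (1 + x) * Real.log M) *
        Real.exp (-x ^ 2 / 2) := by
  have hL2 : ∀ i, MemLp (ξ i) 2 μ := fun i =>
    (memLp_two_iff_integrable_sq ((hadp i).mono (hle i)).aestronglyMeasurable).2 (hsq i)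
  have hexp : ∀ l, 0 ≤ l →
      Integrable (fun ω => exp (l * S ω - l ^ 2 / 2 * B ω)) μ ∧
        ∫ ω, exp (l * S ω - l ^ 2 / 2 * B ω) ∂μ ≤ 1 := fun l hl => by
    subst hS hB
    exact integral_exp_mul_sum_sub_le_one ⟨𝔉, hmono, hle⟩ hadp hL2 hmart hl n
  obtain ⟨γ, hγ, hxγ, K, hK, hMK, hKM⟩ := exists_peeling_grid hx hM
  set slice : ℕ → Set Ω := fun k =>
    {ω | x * √(B ω) ≤ S ω ∧ b * γ ^ k ≤ √(B ω) ∧ √(B ω) ≤ b * γ ^ k * γ}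
  have hcover :
      {ω | x * √(B ω) ≤ S ω ∧ b ≤ √(B ω) ∧ √(B ω) ≤ b * M} ⊆ ⋃ k ∈ range K, slice k := by
    rintro ω ⟨hxS, hbB, hBM⟩
    obtain ⟨k, hk, hk'⟩ := exists_lt_le_and_le_succ (fun k => b * γ ^ k) (by simpa using hbB) hK
      (hBM.trans (mul_le_mul_of_nonneg_left hMK hb.le))
    exact Set.mem_biUnion (mem_range.2 hk) ⟨hxS, by simpa [pow_succ, mul_assoc] using hk'⟩
  have hslice : ∀ k, μ.real (slice k) ≤ exp (1 / 2) * exp (-x ^ 2 / 2) := fun k =>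
    measureReal_le_of_integral_exp_le_one hx (by positivity) hxγ (hexp _ (by positivity)).1
      (hexp _ (by positivity)).2
  calc μ.real {ω | x * √(B ω) ≤ S ω ∧ b ≤ √(B ω) ∧ √(B ω) ≤ b * M}
      ≤ ∑ k ∈ range K, μ.real (slice k) :=
        (measureReal_mono hcover (measure_ne_top _ _)).trans (measureReal_biUnion_finset_le _ _)
    _ ≤ K * (exp (1 / 2) * exp (-x ^ 2 / 2)) := by
        simpa using sum_le_card_nsmul (range K) _ _ fun k _ => hslice k
    _ ≤ (1 + 2 * (1 + x) * log M) * (exp (1 / 2) * exp (-x ^ 2 / 2)) := by gcongr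
    _ = √(exp 1) * (1 + 2 * (1 + x) * log M) * exp (-x ^ 2 / 2) := by
        rw [← exp_half]
        ring
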